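/- For n = 2^k with k ∈ ℕ, the fully balanced tree T^fb_k is the unique rooted binary tree with n leaves minimizing Δ_CS = C - S, and its minimal value is Δ_CS(T^fb_k) = -2^k · k. -/

import Mathlib

/-!
Since `S = C + 2 N_b`, we have `Δ_CS = -2 N_b`, so it suffices to show that `T^fb_k` is the unique
maximiser of `N_b` among trees with `2^k` leaves. In multiplicative form, every tree with `n`
leaves satisfies `4 ^ N_b ≤ n ^ n` (that is, `2 N_b ≤ n log₂ n`), with equality for `T^fb_k`.
This follows by induction from `4 ^ min a b * a ^ a * b ^ b ≤ (a + b) ^ (a + b)`, which is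
strict for `0 < a ≠ b`: so equality forces the two subtrees to have equal size at every vertex.
-/

/-- Rooted binary trees: a leaf, or an internal vertex with two child subtrees. -/
inductive BTree where
  | leaf : BTree
  | node : BTree → BTree → BTree
deriving DecidableEq

namespace BTree

/-- Number of leaves of a rooted binary tree. -/
def numLeaves : BTree → ℕ
  | leaf => 1
  | node l r => numLeaves l + numLeaves r

/-- Sackin index: sum over internal vertices `v` of `n_{v_a} + n_{v_b}`. -/
def sackin : BTree → ℕ
  | leaf => 0
  | node l r => sackin l + sackin r + (numLeaves l + numLeaves r)

/-- Colless index: sum over internal vertices `v` of `|n_{v_a} - n_{v_b}|`. -/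
def colless : BTree → ℕ
  | leaf => 0
  | node l r =>
      colless l + colless r +
        (max (numLeaves l) (numLeaves r) - min (numLeaves l) (numLeaves r))

/-- `N_a`: sum over internal vertices of the larger child-subtree leaf count. -/
def Na : BTree → ℕ
  | leaf => 0
  | node l r => Na l + Na r + max (numLeaves l) (numLeaves r)

/-- `N_b`: sum over internal vertices of the smaller child-subtree leaf count. -/
def Nb : BTree → ℕ
  | leaf => 0
  | node l r => Nb l + Nb r + min (numLeaves l) (numLeaves r)

/-- `Δ_CS = C - S`, as an integer. -/
def deltaCS (T : BTree) : ℤ := (colless T : ℤ) - (sackin T : ℤ)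

/-- Caterpillar trees: every internal vertex has at least one leaf child. -/
def isCaterpillar : BTree → Prop
  | leaf => True
  | node l r => (l = leaf ∧ isCaterpillar r) ∨ (r = leaf ∧ isCaterpillar l)

/-- The fully balanced tree of height `h`. -/
def fbTree : ℕ → BTree
  | 0 => leaf
  | h + 1 => node (fbTree h) (fbTree h)

end BTree

theorem two_pow_mul_pow_le_add_pow {a b : ℕ} (hab : a ≤ b) : 2 ^ a * b ^ b ≤ (a + b) ^ b := by
  rcases Nat.eq_zero_or_pos b with rfl | hb
  · simp_all
  have hb' : (0 : ℝ) < b := by exact_mod_cast hb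
  have hx : (a / b : ℝ) ≤ 1 := (div_le_one hb').2 (by exact_mod_cast hab)
  have bernoulli : (2 : ℝ) ^ (a / b : ℝ) ≤ 1 + a / b := by
    simpa [one_add_one_eq_two] using
      rpow_one_add_le_one_add_mul_self (s := 1) (by norm_num) (by positivity) hx
  have key : (2 : ℝ) ^ a ≤ (1 + a / b) ^ b := by
    calc (2 : ℝ) ^ a = ((2 : ℝ) ^ (a / b : ℝ)) ^ b := by
          rw [← Real.rpow_mul_natCast (by norm_num), div_mul_cancel₀ _ hb'.ne',
            Real.rpow_natCast]
      _ ≤ (1 + a / b) ^ b := by gcongr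
  have : (2 : ℝ) ^ a * b ^ b ≤ (a + b) ^ b := by
    calc (2 : ℝ) ^ a * b ^ b ≤ (1 + a / b) ^ b * b ^ b := by gcongr
      _ = (a + b) ^ b := by rw [← mul_pow]; field_simp; ring
  exact_mod_cast this

theorem four_pow_mul_pow_mul_pow_le {a b : ℕ} (hab : a ≤ b) :
    4 ^ a * (a ^ a * b ^ b) ≤ (a + b) ^ (a + b) :=
  calc 4 ^ a * (a ^ a * b ^ b) = (2 * a) ^ a * (2 ^ a * b ^ b) := by
        rw [mul_pow, show (4 : ℕ) = 2 * 2 by rfl, mul_pow]; ring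
    _ ≤ (a + b) ^ a * (a + b) ^ b := by
        gcongr
        · omega
        · exact two_pow_mul_pow_le_add_pow hab
    _ = (a + b) ^ (a + b) := (pow_add _ _ _).symm

theorem four_pow_mul_pow_mul_pow_lt {a b : ℕ} (ha : 0 < a) (hab : a < b) :
    4 ^ a * (a ^ a * b ^ b) < (a + b) ^ (a + b) :=
  calc 4 ^ a * (a ^ a * b ^ b) = (2 * a) ^ a * (2 ^ a * b ^ b) := by
        rw [mul_pow, show (4 : ℕ) = 2 * 2 by rfl, mul_pow]; ring
    _ < (a + b) ^ a * (a + b) ^ b := by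
        apply Nat.mul_lt_mul_of_lt_of_le _ (two_pow_mul_pow_le_add_pow hab.le) (by positivity)
        exact Nat.pow_lt_pow_left (by omega) ha.ne'
    _ = (a + b) ^ (a + b) := (pow_add _ _ _).symm

theorem four_pow_min_mul_pow_mul_pow_le (a b : ℕ) :
    4 ^ min a b * (a ^ a * b ^ b) ≤ (a + b) ^ (a + b) := by
  rcases le_total a b with h | h
  · rw [min_eq_left h]
    exact four_pow_mul_pow_mul_pow_le h
  · rw [min_eq_right h, mul_comm (a ^ a), add_comm a]
    exact four_pow_mul_pow_mul_pow_le h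

theorem four_pow_min_mul_pow_mul_pow_lt {a b : ℕ} (ha : 0 < a) (hb : 0 < b) (hab : a ≠ b) :
    4 ^ min a b * (a ^ a * b ^ b) < (a + b) ^ (a + b) := by
  rcases hab.lt_or_gt with h | h
  · rw [min_eq_left h.le]
    exact four_pow_mul_pow_mul_pow_lt ha h
  · rw [min_eq_right h.le, mul_comm (a ^ a), add_comm a]
    exact four_pow_mul_pow_mul_pow_lt hb h

theorem add_self_pow_add_self (a : ℕ) : (a + a) ^ (a + a) = 4 ^ a * (a ^ a * a ^ a) := by
  rw [← two_mul, mul_pow, pow_mul, pow_mul]; norm_num; ring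

namespace BTree

theorem numLeaves_pos (T : BTree) : 0 < numLeaves T := by
  induction T with
  | leaf => exact Nat.one_pos
  | node l r _ _ => simp only [numLeaves]; omega

theorem colless_add_two_mul_Nb (T : BTree) : colless T + 2 * Nb T = sackin T := by
  induction T with
  | leaf => rfl
  | node l r ihl ihr =>
    simp only [colless, Nb, sackin]
    rcases le_total (numLeaves l) (numLeaves r) with h | h
    · rw [max_eq_right h, min_eq_left h]; omega
    · rw [max_eq_left h, min_eq_right h]; omega

theorem deltaCS_eq_neg_two_mul_Nb (T : BTree) : deltaCS T = -(2 * Nb T : ℤ) := by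
  rw [deltaCS, ← colless_add_two_mul_Nb]
  push_cast
  ring

theorem numLeaves_fbTree (k : ℕ) : numLeaves (fbTree k) = 2 ^ k := by
  induction k with
  | zero => rfl
  | succ k ih => rw [fbTree, numLeaves, ih, pow_succ, mul_two]

theorem two_mul_Nb_fbTree (k : ℕ) : 2 * Nb (fbTree k) = 2 ^ k * k := by
  induction k with
  | zero => rfl
  | succ k ih =>
    rw [fbTree, Nb, numLeaves_fbTree, min_self, pow_succ]
    linear_combination 2 * ih

theorem four_pow_Nb_fbTree (k : ℕ) :
    4 ^ Nb (fbTree k) = numLeaves (fbTree k) ^ numLeaves (fbTree k) := by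
  rw [numLeaves_fbTree, ← pow_mul, show (4 : ℕ) = 2 ^ 2 by rfl, ← pow_mul, two_mul_Nb_fbTree,
    mul_comm]

theorem four_pow_Nb_node (l r : BTree) :
    4 ^ Nb (node l r) = 4 ^ min (numLeaves l) (numLeaves r) * (4 ^ Nb l * 4 ^ Nb r) := by
  rw [Nb, pow_add, pow_add, mul_comm]

theorem four_pow_Nb_le (T : BTree) : 4 ^ Nb T ≤ numLeaves T ^ numLeaves T := by
  induction T with
  | leaf => decide
  | node l r ihl ihr =>
    rw [four_pow_Nb_node, numLeaves]
    exact (Nat.mul_le_mul_left _ (Nat.mul_le_mul ihl ihr)).trans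
      (four_pow_min_mul_pow_mul_pow_le _ _)

theorem four_pow_Nb_lt {k : ℕ} {T : BTree} (hT : numLeaves T = 2 ^ k) (hne : T ≠ fbTree k) :
    4 ^ Nb T < numLeaves T ^ numLeaves T := by
  induction T generalizing k with
  | leaf =>
    obtain rfl : k = 0 := Nat.pow_eq_one.1 hT.symm |>.resolve_left (by norm_num)
    exact absurd rfl hne
  | node l r ihl ihr =>
    rw [four_pow_Nb_node, numLeaves]
    by_cases hab : numLeaves l = numLeaves r
    swap
    · exact (Nat.mul_le_mul_left _ (Nat.mul_le_mul (four_pow_Nb_le l) (four_pow_Nb_le r))).trans_lt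
        (four_pow_min_mul_pow_mul_pow_lt (numLeaves_pos l) (numLeaves_pos r) hab)
    obtain ⟨j, rfl, hsize⟩ : ∃ j, k = j + 1 ∧ numLeaves l = 2 ^ j := by
      rcases k with _ | j
      · have := numLeaves_pos l; simp only [numLeaves] at hT; omega
      · refine ⟨j, rfl, ?_⟩; rw [numLeaves, pow_succ] at hT; omega
    have hchild : l ≠ fbTree j ∨ r ≠ fbTree j := by
      by_contra! h
      exact hne (by rw [fbTree, h.1, h.2])
    have hprod : 4 ^ Nb l * 4 ^ Nb r < numLeaves l ^ numLeaves l * numLeaves r ^ numLeaves r := by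
      rcases hchild with hl | hr
      · exact Nat.mul_lt_mul_of_lt_of_le (ihl hsize hl) (four_pow_Nb_le r)
          (pow_pos (numLeaves_pos r) _)
      · exact Nat.mul_lt_mul_of_le_of_lt (four_pow_Nb_le l) (ihr (hab ▸ hsize) hr)
          (pow_pos (numLeaves_pos l) _)
    rw [← hab, add_self_pow_add_self, min_self]
    rw [← hab] at hprod
    exact Nat.mul_lt_mul_of_pos_left hprod (by positivity)

end BTree

open BTree in
/-- for `n = 2^k`, the fully balanced tree `T^fb_k` is the unique
minimizer of `Δ_CS`, and `Δ_CS(T^fb_k) = -2^k · k`. -/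
theorem fbTree_unique_min_deltaCS (k : ℕ) :
    deltaCS (fbTree k) = -((2 : ℤ) ^ k * k) ∧
      ∀ T : BTree, numLeaves T = 2 ^ k → T ≠ fbTree k →
        deltaCS (fbTree k) < deltaCS T := by
  refine ⟨?_, fun T hT hne => ?_⟩
  · rw [deltaCS_eq_neg_two_mul_Nb, neg_inj]
    exact_mod_cast two_mul_Nb_fbTree k
  · have hlt : 4 ^ Nb T < 4 ^ Nb (fbTree k) := by
      rw [four_pow_Nb_fbTree, numLeaves_fbTree, ← hT]
      exact four_pow_Nb_lt hT hne
    have hNb := (Nat.pow_lt_pow_iff_right (by norm_num)).1 hlt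
    rw [deltaCS_eq_neg_two_mul_Nb, deltaCS_eq_neg_two_mul_Nb]
    omega
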